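/- Let Φ(ξ₁,ξ₂,ξ₃) = (ξ₁², 2ξ₁ξ₂, 2ξ₁ξ₃) and let m_i(p) = (∇Φ_i(p), −e_i) ∈ ℝ⁶ be the corresponding normal vectors. Then for any p₁ = (ξ₁,ξ₂,ξ₃) and p₂ = (η₁,η₂,η₃) in ℝ³, the transversality determinant satisfies |det(m₁(p₁), m₂(p₁), m₃(p₁), m₁(p₂), m₂(p₂), m₃(p₂))| = 8|ξ₁ − η₁|³. -/

import Mathlib

/-!
Row `i` of the top (bottom) half of the matrix is `(∇Φᵢ(p₁), -eᵢ)` (resp. at `p₂`), so it is the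
block matrix `[J(p₁), -1; J(p₂), -1]` with `J = DΦ`. Subtracting the bottom half from the top leaves
`[J(p₁) - J(p₂), 0; J(p₂), -1]`, whose determinant is `-det (J(p₁) - J(p₂))`. Since `DΦ` is linear
in the point, `J(p₁) - J(p₂) = J(p₁ - p₂)`, a lower triangular matrix with diagonal `2(ξ₁ - η₁)`.
-/

open Matrix

theorem Matrix.det_fromBlocks_neg_one_neg_one {n R : Type*} [Fintype n] [DecidableEq n]
    [CommRing R] (A C : Matrix n n R) :
    (fromBlocks A (-1) C (-1)).det = (-1) ^ Fintype.card n * (A - C).det := by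
  have hfactor : fromBlocks A (-1) C (-1) =
      fromBlocks 1 1 0 1 * fromBlocks (A - C) 0 C (-1 : Matrix n n R) := by
    simp [fromBlocks_multiply]
  rw [hfactor, det_mul, det_fromBlocks_zero₂₁, det_fromBlocks_zero₁₂, det_neg, det_one]
  ring

/-- The Jacobian `DΦ(a, b, c)` of `Φ(ξ) = (ξ₁², 2ξ₁ξ₂, 2ξ₁ξ₃)`; row `i` is `∇Φᵢ`. -/
def modelJacobian (a b c : ℝ) : Matrix (Fin 3) (Fin 3) ℝ :=
  !![2*a, 0, 0; 2*b, 2*a, 0; 2*c, 0, 2*a]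

theorem modelJacobian_sub (a b c a' b' c' : ℝ) :
    modelJacobian a b c - modelJacobian a' b' c' =
      modelJacobian (a - a') (b - b') (c - c') := by
  ext i j
  fin_cases i <;> fin_cases j <;> simp [modelJacobian] <;> ring

theorem det_modelJacobian (a b c : ℝ) : (modelJacobian a b c).det = 8 * a ^ 3 := by
  rw [modelJacobian, det_fin_three]
  simp
  ring

theorem fromBlocks_modelJacobian_eq_reindex (ξ₁ ξ₂ ξ₃ η₁ η₂ η₃ : ℝ) :
    fromBlocks (modelJacobian ξ₁ ξ₂ ξ₃) (-1) (modelJacobian η₁ η₂ η₃) (-1) =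
      reindex (finSumFinEquiv (m := 3) (n := 3)).symm (finSumFinEquiv (m := 3) (n := 3)).symm
        !![2*ξ₁, 0,    0,    -1, 0,  0;
           2*ξ₂, 2*ξ₁, 0,    0,  -1, 0;
           2*ξ₃, 0,    2*ξ₁, 0,  0,  -1;
           2*η₁, 0,    0,    -1, 0,  0;
           2*η₂, 2*η₁, 0,    0,  -1, 0;
           2*η₃, 0,    2*η₁, 0,  0,  -1] := by
  ext (i | i) (j | j) <;> fin_cases i <;> fin_cases j <;> simp [modelJacobian, one_apply] <;> rfl

/-- For `Φ(ξ) = (ξ₁², 2ξ₁ξ₂, 2ξ₁ξ₃)`, the transversality determinant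
`|det(m₁(p₁), m₂(p₁), m₃(p₁), m₁(p₂), m₂(p₂), m₃(p₂))|` (the `mᵢ(p) = (∇Φᵢ(p), −eᵢ)` being
the columns of the matrix, i.e. the rows of its transpose) equals `8|ξ₁ − η₁|³`. -/
theorem stmt9 (ξ₁ ξ₂ ξ₃ η₁ η₂ η₃ : ℝ) :
    |(Matrix.transpose
      !![2*ξ₁, 0,    0,    -1, 0,  0;
         2*ξ₂, 2*ξ₁, 0,    0,  -1, 0;
         2*ξ₃, 0,    2*ξ₁, 0,  0,  -1;
         2*η₁, 0,    0,    -1, 0,  0;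
         2*η₂, 2*η₁, 0,    0,  -1, 0;
         2*η₃, 0,    2*η₁, 0,  0,  -1]).det| = 8 * |ξ₁ - η₁| ^ 3 := by
  have hdet := congrArg det (fromBlocks_modelJacobian_eq_reindex ξ₁ ξ₂ ξ₃ η₁ η₂ η₃)
  rw [det_reindex_self, det_fromBlocks_neg_one_neg_one, modelJacobian_sub,
    det_modelJacobian] at hdet
  rw [det_transpose, ← hdet, abs_mul, abs_mul, abs_pow, abs_pow]
  norm_num
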